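/- arXiv:1901.01797 — 2 statements merged into one kernel-verified Lean document; each statement's English description precedes it below -/
import Mathlib

section
/- For every integer d ≥ 0, the class T_d of chordal ordered graphs with all left-degrees at most d is a Baker class. -/
/-- A layering of a simple graph: adjacent vertices differ by at most 1. -/
def IsLayering {V : Type*} (G : SimpleGraph V) (lam : V → ℤ) : Prop :=
  ∀ ⦃u v : V⦄, G.Adj u v → |lam u - lam v| ≤ 1

/-- The spanning subgraph of `G` keeping only the edges with both ends in `U`.
Reachability and distances between vertices of `U` in this graph coincide with those
in the induced subgraph `G[U]`. -/
def restrictSet {V : Type*} (G : SimpleGraph V) (U : Set V) : SimpleGraph V where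
  Adj u v := G.Adj u v ∧ u ∈ U ∧ v ∈ U
  symm := ⟨fun _ _ ⟨h, hu, hv⟩ => ⟨h.symm, hv, hu⟩⟩
  loopless := ⟨fun _ ⟨h, _, _⟩ => G.irrefl h⟩

/-- `BakerWins G t S r` : Destroyer wins the Baker game in at most `t` rounds on the state
whose ordered graph is the subgraph of `G` induced on `S` (with the inherited vertex order)
and whose sequence is `r` (0-indexed: `r 0` is the first term `r₁`).
If the vertex set is empty, Destroyer has won; otherwise he needs `t ≥ 1` and either
(Delete) he wins on the graph minus its smallest vertex with the tail of the sequence, or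
(Restrict) there is a layering `lam` of the current graph such that for every interval of
at most `r 0` consecutive integers, he wins on the induced subgraph on the corresponding
layers with the tail of the sequence. -/
def BakerWins {V : Type*} [LinearOrder V] (G : SimpleGraph V) :
    ℕ → Set V → (ℕ → ℕ) → Prop
  | 0, S, _ => S = ∅
  | t + 1, S, r => S = ∅ ∨
      ((∃ v ∈ S, (∀ u ∈ S, v ≤ u) ∧ BakerWins G t (S \ {v}) (fun i => r (i + 1))) ∨
       (∃ lam : V → ℤ,
          (∀ u ∈ S, ∀ w ∈ S, G.Adj u w → |lam u - lam w| ≤ 1) ∧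
          ∀ a b : ℤ, b + 1 ≤ a + (r 0 : ℤ) →
            BakerWins G t {v | v ∈ S ∧ lam v ∈ Set.Icc a b} (fun i => r (i + 1))))

/-- An ordered graph: a finite simple graph with a linear order on its vertices. -/
structure OrderedGraph : Type 1 where
  V : Type
  [fin : Fintype V]
  [ord : LinearOrder V]
  graph : SimpleGraph V

attribute [instance] OrderedGraph.fin OrderedGraph.ord

/-- A class of ordered graphs is a Baker class if for every infinite sequence of positive
integers `r` there is `t` such that Destroyer wins the Baker game on `(G, r)` in `t` rounds
for every `G` in the class. -/
def IsBakerClass (C : Set OrderedGraph) : Prop :=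
  ∀ r : ℕ → ℕ, (∀ i, 0 < r i) → ∃ t : ℕ, ∀ O ∈ C, BakerWins O.graph t Set.univ r

/-- A graph with an ordered vertex set is chordal (as an ordered graph) if for every
vertex `v` the neighbors of `v` smaller than `v` induce a clique. -/
def ChordalOrdered {V : Type*} [LinearOrder V] (G : SimpleGraph V) : Prop :=
  ∀ ⦃v u w : V⦄, G.Adj v u → G.Adj v w → u < v → w < v → u ≠ w → G.Adj u w

/-- The class `T_d` of chordal ordered graphs with all left-degrees at most `d`. -/
def Tclass (d : ℕ) : Set OrderedGraph :=
  {O | ChordalOrdered O.graph ∧ ∀ v : O.V, ({u | O.graph.Adj v u ∧ u < v}).ncard ≤ d}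

/-!
Induction on `d`. For `d = 0` there are no edges, so layers `r₁` apart isolate single vertices.
For `d + 1`, Destroyer restricts with the breadth-first-search layering that starts every
component at its smallest vertex. By chordality, a vertex with a smaller neighbour has one on the
level below; hence inside a window of `r₁` consecutive levels the level never decreases along an
edge towards the larger end, and every vertex has at most `d` smaller neighbours on its own level.
Such a window is won by induction on the number of levels. The lowest level induces a graph in
`T_d`, and each round of Destroyer's strategy there is simulated by two rounds on the window: the
first splits off the vertices whose chain of smaller neighbours misses the lowest level (a window
with one level fewer, with no edges to the rest), the second copies the move on the lowest level,
a layering being transported along those chains, which by chordality keeps it a layering.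
-/

namespace BakerWins

variable {V : Type*} [LinearOrder V] {G G' : SimpleGraph V}

theorem empty (t : ℕ) (r : ℕ → ℕ) : BakerWins G t ∅ r := by
  cases t <;> simp [BakerWins]

theorem mono {t t' : ℕ} {S : Set V} {r : ℕ → ℕ} (h : BakerWins G t S r) (htt' : t ≤ t') :
    BakerWins G t' S r := by
  induction t' generalizing t S r with
  | zero => rwa [Nat.le_zero.mp htt'] at h
  | succ t' ih =>
    cases t with
    | zero => exact Or.inl h
    | succ t =>
      have htt' : t ≤ t' := by omega
      rcases h with h | ⟨v, hv, hmin, h⟩ | ⟨lam, hlam, h⟩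
      · exact Or.inl h
      · exact Or.inr (Or.inl ⟨v, hv, hmin, ih h htt'⟩)
      · exact Or.inr (Or.inr ⟨lam, hlam, fun a b hab => ih (h a b hab) htt'⟩)

theorem of_subset [WellFoundedLT V] {t : ℕ} {S T : Set V} {r : ℕ → ℕ} (h : BakerWins G t S r)
    (hTS : T ⊆ S) : BakerWins G t T r := by
  induction t generalizing S T r with
  | zero => exact Set.subset_eq_empty hTS h
  | succ t ih =>
    rcases h with h | ⟨v, hv, hmin, h⟩ | ⟨lam, hlam, h⟩
    · exact Or.inl (Set.subset_eq_empty hTS h)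
    · rcases T.eq_empty_or_nonempty with hT | ⟨w, hw⟩
      · exact Or.inl hT
      by_cases hvT : v ∈ T
      · exact Or.inr (Or.inl ⟨v, hvT, fun u hu => hmin u (hTS hu),
          ih h (Set.sdiff_subset_sdiff_left hTS)⟩)
      · have hm := wellFounded_lt.min_mem T ⟨w, hw⟩
        refine Or.inr (Or.inl ⟨_, hm, fun u hu => wellFounded_lt.min_le hu, ih h ?_⟩)
        exact fun x hx => ⟨hTS hx.1, fun hxv => hvT (hxv ▸ hx.1)⟩
    · exact Or.inr (Or.inr ⟨lam, fun u hu w hw => hlam u (hTS hu) w (hTS hw),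
        fun a b hab => ih (h a b hab) fun x hx => ⟨hTS hx.1, hx.2⟩⟩)

theorem of_adj_imp {t : ℕ} {S : Set V} {r : ℕ → ℕ} (h : BakerWins G t S r)
    (hGG' : ∀ u ∈ S, ∀ v ∈ S, G'.Adj u v → G.Adj u v) : BakerWins G' t S r := by
  induction t generalizing S r with
  | zero => exact h
  | succ t ih =>
    rcases h with h | ⟨v, hv, hmin, h⟩ | ⟨lam, hlam, h⟩
    · exact Or.inl h
    · exact Or.inr (Or.inl ⟨v, hv, hmin,
        ih h fun u hu w hw => hGG' u hu.1 w hw.1⟩)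
    · exact Or.inr (Or.inr ⟨lam, fun u hu w hw huw => hlam u hu w hw (hGG' u hu w hw huw),
        fun a b hab => ih (h a b hab) fun u hu w hw => hGG' u hu.1 w hw.1⟩)

theorem of_subsingleton {S : Set V} (hS : S.Subsingleton) (r : ℕ → ℕ) : BakerWins G 1 S r := by
  rcases hS.eq_empty_or_singleton with rfl | ⟨v, rfl⟩
  · exact empty 1 r
  · exact Or.inr (Or.inl ⟨v, rfl, fun u hu => (Set.mem_singleton_iff.mp hu).ge,
      by simp [BakerWins]⟩)

/-- `S₁` goes on layer `0` and the rest on layer `r 0`: no window of `r 0` consecutive layers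
contains both. -/
theorem union_of_forall_not_adj [WellFoundedLT V] {t : ℕ} {S₁ S₂ : Set V} {r : ℕ → ℕ}
    (hsep : ∀ u ∈ S₁, ∀ v ∈ S₂, ¬ G.Adj u v)
    (h₁ : BakerWins G t S₁ (fun i => r (i + 1))) (h₂ : BakerWins G t S₂ (fun i => r (i + 1))) :
    BakerWins G (t + 1) (S₁ ∪ S₂) r := by
  classical
  refine Or.inr (Or.inr ⟨fun v => if v ∈ S₁ then 0 else r 0, ?_, fun a b hab => ?_⟩)
  · intro u hu w hw huw
    by_cases hu₁ : u ∈ S₁ <;> by_cases hw₁ : w ∈ S₁ <;> simp only [hu₁, hw₁, if_true, if_false]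
    · simp
    · exact absurd huw (hsep u hu₁ w (hw.resolve_left hw₁))
    · exact absurd huw.symm (hsep w hw₁ u (hu.resolve_left hu₁))
    · simp
  · by_cases h0 : (0 : ℤ) ∈ Set.Icc a b
    · refine h₁.of_subset fun v ⟨_, hv⟩ => ?_
      by_contra hv₁
      simp only [hv₁, if_false, Set.mem_Icc] at hv h0
      omega
    · refine h₂.of_subset fun v ⟨hv, hvI⟩ => ?_
      have hv₁ : v ∉ S₁ := fun hv₁ => h0 (by simpa [hv₁] using hvI)
      exact hv.resolve_left hv₁

end BakerWins

section Anchor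

variable {V : Type*} [LinearOrder V] (G : SimpleGraph V) (S B : Set V)

attribute [local instance] WellFoundedLT.toWellFoundedRelation

open Classical in
noncomputable def anchor [WellFoundedLT V] (v : V) : V :=
  if v ∈ B then v
  else if h : ∃ u ∈ S, G.Adj v u ∧ u < v then anchor h.choose else v
termination_by v
decreasing_by exact h.choose_spec.2.2

def anchoredPart [WellFoundedLT V] : Set V := {v | v ∈ S ∧ anchor G S B v ∈ B}

def IsDownClosedOn : Prop := ∀ ⦃u v⦄, u ∈ S → v ∈ S → G.Adj u v → u < v → v ∈ B → u ∈ B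

variable {G S B}

theorem IsDownClosedOn.mono {S' : Set V} (hB : IsDownClosedOn G S B) (hS' : S' ⊆ S) :
    IsDownClosedOn G S' B :=
  fun _ _ hu hv => hB (hS' hu) (hS' hv)

variable [WellFoundedLT V]

theorem anchor_of_mem {v : V} (hv : v ∈ B) : anchor G S B v = v := by
  rw [anchor, if_pos hv]

theorem anchor_of_notMem {v : V} (hv : v ∉ B) (h : ∃ u ∈ S, G.Adj v u ∧ u < v) :
    anchor G S B v = anchor G S B h.choose := by
  rw [anchor, if_neg hv, dif_pos h]

theorem anchor_le (v : V) : anchor G S B v ≤ v := by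
  fun_induction anchor G S B v with
  | case1 => rfl
  | case2 v _ h ih => exact ih.trans h.choose_spec.2.2.le
  | case3 => rfl

theorem anchor_mem {v : V} (hv : v ∈ S) : anchor G S B v ∈ S := by
  fun_induction anchor G S B v with
  | case1 => exact hv
  | case2 v _ h ih => exact ih h.choose_spec.1
  | case3 => exact hv

theorem anchor_mem_or_forall_not_lt (v : V) :
    anchor G S B v ∈ B ∨ ∀ u ∈ S, G.Adj (anchor G S B v) u → ¬ u < anchor G S B v := by
  fun_induction anchor G S B v with
  | case1 v hv => exact Or.inl hv
  | case2 => assumption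
  | case3 v _ h => exact Or.inr fun u hu hvu huv => h ⟨u, hu, hvu, huv⟩

/-- By chordality the smaller neighbour of `v` chosen by `anchor` is equal or adjacent to `u`, so
the induction hypothesis applies to that pair. -/
theorem anchor_eq_or_adj_of_lt (hG : ChordalOrdered G) (hB : IsDownClosedOn G S B) {u v : V}
    (hu : u ∈ S) (hv : v ∈ S) (huv : G.Adj u v) (hlt : u < v) :
    anchor G S B u = anchor G S B v ∨ G.Adj (anchor G S B u) (anchor G S B v) := by
  induction v using WellFoundedLT.induction generalizing u with
  | _ v ih =>
    by_cases hvB : v ∈ B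
    · rw [anchor_of_mem (hB hu hv huv hlt hvB), anchor_of_mem hvB]
      exact Or.inr huv
    have h : ∃ u ∈ S, G.Adj v u ∧ u < v := ⟨u, hu, huv.symm, hlt⟩
    obtain ⟨hm, hvm, hmv⟩ := h.choose_spec
    rw [anchor_of_notMem hvB h]
    rcases lt_trichotomy u h.choose with hum | hum | hmu
    · exact ih _ hmv hu hm (hG huv.symm hvm hlt hmv hum.ne) hum
    · exact Or.inl (by rw [hum])
    · exact (ih u hlt hm hu (hG hvm huv.symm hmv hlt hmu.ne) hmu).imp Eq.symm SimpleGraph.Adj.symm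

theorem anchor_eq_or_adj (hG : ChordalOrdered G) (hB : IsDownClosedOn G S B) {u v : V}
    (hu : u ∈ S) (hv : v ∈ S) (huv : G.Adj u v) :
    anchor G S B u = anchor G S B v ∨ G.Adj (anchor G S B u) (anchor G S B v) := by
  rcases lt_trichotomy u v with hlt | rfl | hlt
  · exact anchor_eq_or_adj_of_lt hG hB hu hv huv hlt
  · exact absurd huv (G.irrefl)
  · exact (anchor_eq_or_adj_of_lt hG hB hv hu huv.symm hlt).imp Eq.symm SimpleGraph.Adj.symm

theorem not_adj_of_mem_anchoredPart (hG : ChordalOrdered G) (hB : IsDownClosedOn G S B)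
    {u w : V} (hu : u ∈ anchoredPart G S B) (hw : w ∈ S \ anchoredPart G S B) :
    ¬ G.Adj u w := by
  intro huw
  have hwB : anchor G S B w ∉ B := fun h => hw.2 ⟨hw.1, h⟩
  rcases anchor_eq_or_adj hG hB hu.1 hw.1 huw with heq | hadj
  · exact hwB (heq ▸ hu.2)
  rcases lt_trichotomy (anchor G S B u) (anchor G S B w) with hlt | heq | hlt
  · exact (anchor_mem_or_forall_not_lt w).elim hwB
      fun h => h _ (anchor_mem hu.1) hadj.symm hlt
  · exact G.irrefl (heq ▸ hadj)
  · exact hwB (hB (anchor_mem hw.1) (anchor_mem hu.1) hadj.symm hlt hu.2)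

theorem inter_subset_anchoredPart : S ∩ B ⊆ anchoredPart G S B :=
  fun _ hv => ⟨hv.1, by rw [anchor_of_mem hv.2]; exact hv.2⟩

theorem anchor_mem_inter {v : V} (hv : v ∈ anchoredPart G S B) : anchor G S B v ∈ S ∩ B :=
  ⟨anchor_mem hv.1, hv.2⟩

end Anchor

theorem BakerWins.of_inter_of_sdiff {V : Type*} [LinearOrder V] [WellFoundedLT V]
    {G : SimpleGraph V} (hG : ChordalOrdered G) {B : Set V} {T : ℕ} (tB : ℕ) {S : Set V}
    {r : ℕ → ℕ} (hB : IsDownClosedOn G S B)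
    (hsdiff : ∀ i ≤ 2 * tB + 1, BakerWins G T (S \ B) (fun k => r (k + i)))
    (hinter : BakerWins G tB (S ∩ B) (fun j => r (2 * j + 1))) :
    BakerWins G (2 * tB + T) S r := by
  induction tB generalizing S r with
  | zero =>
    have hSB : S ∩ B = ∅ := hinter
    simpa using (hsdiff 0 (by omega)).of_subset fun v hv => ⟨hv, fun hvB => hSB.subset ⟨hv, hvB⟩⟩
  | succ tB ih =>
    set A := anchoredPart G S B
    have hAS : A ⊆ S := fun v hv => hv.1
    have hnext : ∀ S' ⊆ A, BakerWins G tB (S' ∩ B) (fun j => r (2 * j + 3)) →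
        BakerWins G (2 * tB + T) S' (fun k => r (k + 2)) := fun S' hS' h =>
      ih (hB.mono (hS'.trans hAS))
        (fun i hi => (hsdiff (i + 2) (by omega)).of_subset
          (Set.sdiff_subset_sdiff_left (hS'.trans hAS)))
        h
    have hrest : S \ A ⊆ S \ B :=
      fun v hv => ⟨hv.1, fun hvB => hv.2 (inter_subset_anchoredPart ⟨hv.1, hvB⟩)⟩
    rw [show 2 * (tB + 1) + T = 2 * tB + T + 1 + 1 by ring, ← Set.union_sdiff_cancel hAS]
    refine BakerWins.union_of_forall_not_adj
      (fun u hu w hw => not_adj_of_mem_anchoredPart hG hB hu hw)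
      ?_ (((hsdiff 1 (by omega)).of_subset hrest).mono (by omega))
    rcases hinter with hempty | ⟨b, hb, hbmin, hinter⟩ | ⟨lam, hlam, hinter⟩
    · have hA : A = ∅ := Set.eq_empty_of_forall_notMem fun v hv => by
        simpa [hempty] using anchor_mem_inter hv
      exact hA ▸ BakerWins.empty _ _
    · refine Or.inr (Or.inl ⟨b, inter_subset_anchoredPart hb,
        fun v hv => (hbmin _ (anchor_mem_inter hv)).trans (anchor_le v), hnext _ ?_ ?_⟩)
      · exact Set.sdiff_subset
      · exact hinter.of_subset fun v ⟨⟨hvA, hvb⟩, hvB⟩ => ⟨⟨hvA.1, hvB⟩, hvb⟩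
    · refine Or.inr (Or.inr ⟨lam ∘ anchor G S B, fun u hu w hw huw => ?_, fun a c hac => ?_⟩)
      · rcases anchor_eq_or_adj hG hB hu.1 hw.1 huw with heq | hadj
        · simp [heq]
        · exact hlam _ (anchor_mem_inter hu) _ (anchor_mem_inter hw) hadj
      · refine hnext _ (fun v hv => hv.1) ?_
        refine (hinter a c hac).of_subset fun v ⟨⟨hvA, hvI⟩, hvB⟩ => ⟨⟨hvA.1, hvB⟩, ?_⟩
        rwa [Function.comp_apply, anchor_of_mem hvB] at hvI

theorem SimpleGraph.exists_adj_dist_eq_of_dist_eq_add_one {V : Type*} {G : SimpleGraph V}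
    {u v : V} {n : ℕ} (h : G.dist u v = n + 1) : ∃ x, G.Adj v x ∧ G.dist u x = n := by
  have hvu : G.dist v u = n + 1 := by rw [dist_comm, h]
  obtain ⟨p, hp⟩ := exists_walk_of_dist_ne_zero (hvu.trans_ne n.succ_ne_zero)
  have hne : v ≠ u := by rintro rfl; simp at hvu
  obtain ⟨x, hvx, q, rfl⟩ := p.exists_eq_cons_of_ne hne
  have hq : G.dist x u ≤ n := by
    have := G.dist_le q
    rw [Walk.length_cons] at hp
    omega
  have := hvx.diff_dist_adj (u := u)
  refine ⟨x, hvx, ?_⟩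
  rw [dist_comm] at hq
  omega

section BFS

variable {V : Type*} [LinearOrder V] [WellFoundedLT V] (G : SimpleGraph V)

noncomputable def componentMin (v : V) : V :=
  (wellFounded_lt (α := V)).min {u | G.Reachable u v} ⟨v, .refl v⟩

noncomputable def bfsLevel (v : V) : ℕ := G.dist (componentMin G v) v

variable {G}

theorem componentMin_le_of_reachable {u v : V} (h : G.Reachable u v) : componentMin G v ≤ u :=
  (wellFounded_lt (α := V)).min_le h

theorem reachable_componentMin (v : V) : G.Reachable (componentMin G v) v :=
  (wellFounded_lt (α := V)).min_mem {u | G.Reachable u v} ⟨v, .refl v⟩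

theorem componentMin_eq_of_reachable {u v : V} (h : G.Reachable u v) :
    componentMin G u = componentMin G v :=
  le_antisymm (componentMin_le_of_reachable ((reachable_componentMin v).trans h.symm))
    (componentMin_le_of_reachable ((reachable_componentMin u).trans h))

theorem bfsLevel_eq_zero_iff {v : V} : bfsLevel G v = 0 ↔ componentMin G v = v :=
  (reachable_componentMin v).dist_eq_zero_iff

theorem bfsLevel_le_add_one_of_adj {u v : V} (huv : G.Adj u v) :
    bfsLevel G u ≤ bfsLevel G v + 1 := by
  have := huv.symm.diff_dist_adj (u := componentMin G v)
  simp only [bfsLevel, componentMin_eq_of_reachable huv.reachable]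
  omega

theorem isLayering_bfsLevel : IsLayering G (fun v => (bfsLevel G v : ℤ)) := fun _ _ huv => by
  have := bfsLevel_le_add_one_of_adj huv
  have := bfsLevel_le_add_one_of_adj huv.symm
  simp only [abs_le]
  omega

theorem exists_adj_bfsLevel_eq {v : V} {n : ℕ} (h : bfsLevel G v = n + 1) :
    ∃ x, G.Adj v x ∧ bfsLevel G x = n := by
  obtain ⟨x, hvx, hx⟩ := SimpleGraph.exists_adj_dist_eq_of_dist_eq_add_one h
  exact ⟨x, hvx, by rwa [bfsLevel, componentMin_eq_of_reachable hvx.symm.reachable]⟩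

/-- In a chordal ordered graph the step one level down can always be taken to a smaller vertex:
if the neighbour `x` one level lower were larger than `v`, then `v` and the lower neighbour of `x`
would be smaller neighbours of `x` two levels apart, hence adjacent, which is impossible. -/
theorem exists_adj_lt_bfsLevel_eq (hG : ChordalOrdered G) {n : ℕ} :
    ∀ {v : V}, bfsLevel G v = n + 1 → ∃ w, G.Adj v w ∧ w < v ∧ bfsLevel G w = n := by
  induction n with
  | zero =>
    intro v hv
    obtain ⟨x, hvx, hx⟩ := exists_adj_bfsLevel_eq hv
    refine ⟨x, hvx, lt_of_le_of_ne ?_ hvx.ne.symm, hx⟩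
    rw [← bfsLevel_eq_zero_iff.mp hx, componentMin_eq_of_reachable hvx.symm.reachable]
    exact componentMin_le_of_reachable (.refl v)
  | succ n ih =>
    intro v hv
    obtain ⟨x, hvx, hx⟩ := exists_adj_bfsLevel_eq hv
    refine ⟨x, hvx, lt_of_not_ge fun hvx_le => ?_, hx⟩
    obtain ⟨y, hxy, hyx, hy⟩ := ih hx
    have hyv : G.Adj y v := hG hxy hvx.symm hyx (lt_of_le_of_ne hvx_le hvx.ne)
      (by rintro rfl; omega)
    have := bfsLevel_le_add_one_of_adj hyv.symm
    omega

theorem bfsLevel_ne_zero_of_adj_of_lt {u v : V} (huv : G.Adj u v) (hlt : u < v) :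
    bfsLevel G v ≠ 0 := fun h0 => hlt.not_ge <| by
  rw [← bfsLevel_eq_zero_iff.mp h0]
  exact componentMin_le_of_reachable huv.reachable

theorem exists_adj_lt_bfsLevel_lt (hG : ChordalOrdered G) {u v : V} (huv : G.Adj u v)
    (hlt : u < v) : ∃ w, G.Adj v w ∧ w < v ∧ bfsLevel G w < bfsLevel G v := by
  obtain ⟨n, hn⟩ := Nat.exists_eq_succ_of_ne_zero (bfsLevel_ne_zero_of_adj_of_lt huv hlt)
  obtain ⟨w, hvw, hwv, hw⟩ := exists_adj_lt_bfsLevel_eq hG hn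
  exact ⟨w, hvw, hwv, by omega⟩

theorem bfsLevel_le_of_adj_of_lt (hG : ChordalOrdered G) {u v : V} (huv : G.Adj u v)
    (hlt : u < v) : bfsLevel G u ≤ bfsLevel G v := by
  obtain ⟨w, hvw, hwv, hw⟩ := exists_adj_lt_bfsLevel_lt hG huv hlt
  have := bfsLevel_le_add_one_of_adj huv
  by_contra! hvu
  have := bfsLevel_le_add_one_of_adj (hG huv.symm hvw hlt hwv (by rintro rfl; omega))
  omega

end BFS

structure IsGrading {V : Type*} [LinearOrder V] (G : SimpleGraph V) (S : Set V) (μ : V → ℤ)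
    (a : ℤ) (m e : ℕ) : Prop where
  mem_Ico : ∀ v ∈ S, μ v ∈ Set.Ico a (a + m)
  le_of_adj : ∀ ⦃u v⦄, u ∈ S → v ∈ S → G.Adj u v → u < v → μ u ≤ μ v
  ncard_le : ∀ v ∈ S, {u | u ∈ S ∧ G.Adj v u ∧ u < v ∧ μ u = μ v}.ncard ≤ e

namespace IsGrading

variable {V : Type*} [LinearOrder V] {G : SimpleGraph V} {S : Set V} {μ : V → ℤ} {a : ℤ}
  {m e : ℕ}

theorem isDownClosedOn (hS : IsGrading G S μ a m e) : IsDownClosedOn G S {v | μ v = a} :=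
  fun u v hu hv huv hlt (hva : μ v = a) =>
    le_antisymm (hva ▸ hS.le_of_adj hu hv huv hlt) (hS.mem_Ico u hu).1

theorem sdiff [Finite V] (hS : IsGrading G S μ a (m + 1) e) :
    IsGrading G (S \ {v | μ v = a}) μ (a + 1) m e where
  mem_Ico v hv := by
    obtain ⟨hav, hva⟩ := hS.mem_Ico v hv.1
    have : μ v ≠ a := hv.2
    push_cast at hva ⊢
    exact ⟨by omega, by omega⟩
  le_of_adj _ _ hu hv := hS.le_of_adj hu.1 hv.1
  ncard_le v hv := by
    refine (Set.ncard_le_ncard ?_).trans (hS.ncard_le v hv.1)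
    exact fun u hu => ⟨hu.1.1, hu.2⟩

end IsGrading

theorem restrictSet_mem_tclass {V : Type} [Fintype V] [LinearOrder V] {G : SimpleGraph V}
    (hG : ChordalOrdered G) {U : Set V} {e : ℕ}
    (hU : ∀ v ∈ U, {u | u ∈ U ∧ G.Adj v u ∧ u < v}.ncard ≤ e) :
    (⟨V, restrictSet G U⟩ : OrderedGraph) ∈ Tclass e := by
  refine ⟨fun v u w ⟨hvu, hv, hu⟩ ⟨hvw, _, hw⟩ huv hwv huw => ⟨hG hvu hvw huv hwv huw, hu, hw⟩,
    fun v => ?_⟩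
  by_cases hv : v ∈ U
  · refine (Set.ncard_le_ncard ?_).trans (hU v hv)
    exact fun u ⟨⟨hvu, _, hu⟩, huv⟩ => ⟨hu, hvu, huv⟩
  · simp [restrictSet, hv]

theorem IsBakerClass.exists_bakerWins_of_chordalOrdered {e : ℕ} (he : IsBakerClass (Tclass e))
    {r : ℕ → ℕ} (hr : ∀ i, 0 < r i) :
    ∃ t, ∀ (V : Type) [Fintype V] [LinearOrder V] (G : SimpleGraph V) (U : Set V),
      ChordalOrdered G → (∀ v ∈ U, {u | u ∈ U ∧ G.Adj v u ∧ u < v}.ncard ≤ e) →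
      BakerWins G t U r := by
  obtain ⟨t, ht⟩ := he r hr
  refine ⟨t, fun V _ _ G U hG hU => ?_⟩
  have := (ht _ (restrictSet_mem_tclass hG hU)).of_subset (Set.subset_univ U)
  exact this.of_adj_imp fun _ hu _ hv huv => ⟨huv, hu, hv⟩

theorem IsBakerClass.exists_bakerWins_of_isGrading {e : ℕ} (he : IsBakerClass (Tclass e))
    (m : ℕ) {r : ℕ → ℕ} (hr : ∀ i, 0 < r i) :
    ∃ t, ∀ (V : Type) [Fintype V] [LinearOrder V] (G : SimpleGraph V) (S : Set V) (μ : V → ℤ)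
      (a : ℤ), ChordalOrdered G → IsGrading G S μ a m e → BakerWins G t S r := by
  induction m generalizing r with
  | zero =>
    refine ⟨0, fun V _ _ G S μ a _ hS => Set.eq_empty_of_forall_notMem fun v hv => ?_⟩
    have := hS.mem_Ico v hv
    simp at this
  | succ m ih =>
    obtain ⟨tB, htB⟩ :=
      he.exists_bakerWins_of_chordalOrdered (r := fun j => r (2 * j + 1)) fun _ => hr _
    choose t ht using fun i => ih (r := fun k => r (k + i)) fun _ => hr _
    refine ⟨2 * tB + (Finset.range (2 * tB + 2)).sup t, fun V _ _ G S μ a hG hS => ?_⟩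
    refine BakerWins.of_inter_of_sdiff hG tB hS.isDownClosedOn (fun i hi => ?_) ?_
    · exact (ht i V G _ μ (a + 1) hG hS.sdiff).mono
        (Finset.le_sup (Finset.mem_range.mpr (by omega)))
    · refine htB V G _ hG fun v hv => ?_
      refine (Set.ncard_le_ncard ?_).trans (hS.ncard_le v hv.1)
      exact fun u ⟨hu, hvu, huv⟩ => ⟨hu.1, hvu, huv, hu.2.trans hv.2.symm⟩

theorem isGrading_bfsLevel {V : Type*} [LinearOrder V] [Finite V]
    {G : SimpleGraph V} (hG : ChordalOrdered G) {e m : ℕ}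
    (hdeg : ∀ v, {u | G.Adj v u ∧ u < v}.ncard ≤ e + 1) {S : Set V} {a b : ℤ}
    (hab : b + 1 ≤ a + m) (hS : ∀ v ∈ S, (bfsLevel G v : ℤ) ∈ Set.Icc a b) :
    IsGrading G S (fun v => bfsLevel G v) a m e where
  mem_Ico v hv := by
    obtain ⟨hav, hvb⟩ := hS v hv
    exact ⟨hav, by omega⟩
  le_of_adj _ _ _ _ huv hlt := by exact_mod_cast bfsLevel_le_of_adj_of_lt hG huv hlt
  ncard_le v _ := by
    set same := {u | u ∈ S ∧ G.Adj v u ∧ u < v ∧ (bfsLevel G u : ℤ) = bfsLevel G v}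
    rcases same.eq_empty_or_nonempty with h | ⟨u, -, hvu, huv, -⟩
    · simp [h]
    obtain ⟨w, hvw, hwv, hw⟩ := exists_adj_lt_bfsLevel_lt hG hvu.symm huv
    have hsub : same ⊂ {u | G.Adj v u ∧ u < v} := by
      refine (Set.ssubset_iff_of_subset ?_).mpr ⟨w, ⟨hvw, hwv⟩, ?_⟩
      · exact fun u hu => ⟨hu.2.1, hu.2.2.1⟩
      · exact fun hw' => hw.ne (by exact_mod_cast hw'.2.2.2)
    have := Set.ncard_lt_ncard hsub
    have := hdeg v
    omega

theorem IsBakerClass.tclass_succ {e : ℕ} (he : IsBakerClass (Tclass e)) :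
    IsBakerClass (Tclass (e + 1)) := by
  intro r hr
  obtain ⟨t, ht⟩ := he.exists_bakerWins_of_isGrading (r 0) (r := fun i => r (i + 1)) fun _ => hr _
  refine ⟨t + 1, fun O ⟨hG, hdeg⟩ => Or.inr (Or.inr ⟨fun v => bfsLevel O.graph v,
    fun _ _ _ _ huv => isLayering_bfsLevel huv, fun a b hab => ?_⟩)⟩
  exact ht O.V O.graph _ _ a hG (isGrading_bfsLevel hG hdeg hab fun _ hv => hv.2)

theorem not_adj_of_mem_tclass_zero {O : OrderedGraph} (hO : O ∈ Tclass 0) (u v : O.V) :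
    ¬ O.graph.Adj u v := by
  wlog huv : u < v generalizing u v
  · intro h
    exact this v u (lt_of_le_of_ne (not_lt.mp huv) h.ne.symm) h.symm
  intro h
  have := hO.2 v
  rw [Nat.le_zero, Set.ncard_eq_zero] at this
  exact this.subset ⟨h.symm, huv⟩

theorem isBakerClass_tclass_zero : IsBakerClass (Tclass 0) := by
  intro r hr
  refine ⟨2, fun O hO => Or.inr (Or.inr ⟨fun v => r 0 * (Fintype.equivFin O.V v : ℤ),
    fun u _ v _ huv => absurd huv (not_adj_of_mem_tclass_zero hO u v), fun a b hab => ?_⟩)⟩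
  refine BakerWins.of_subsingleton ?_ _
  rintro x ⟨-, hxa, hxb⟩ y ⟨-, hya, hyb⟩
  have hxy : (r 0 : ℤ) * ((Fintype.equivFin O.V x : ℤ) - Fintype.equivFin O.V y) = 0 :=
    Int.eq_zero_of_abs_lt_dvd (dvd_mul_right _ _) (abs_lt.mpr ⟨by linarith, by linarith⟩)
  rcases mul_eq_zero.mp hxy with h | h
  · exact absurd h (by exact_mod_cast (hr 0).ne')
  · exact (Fintype.equivFin O.V).injective (Fin.ext (by exact_mod_cast sub_eq_zero.mp h))

/-- For every integer `d ≥ 0`, the class `T_d` of chordal ordered graphs with all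
left-degrees at most `d` is a Baker class. -/
theorem stmt_7 (d : ℕ) : IsBakerClass (Tclass d) := by
  induction d with
  | zero => exact isBakerClass_tclass_zero
  | succ d ih => exact ih.tclass_succ
end

section
/- Let d ≥ 1 be an integer, let G be a connected chordal ordered graph with all left-degrees at most d, let v be the smallest vertex of G, and let λ be the BFS layering of G starting from v. Then for every integer j ≥ 1, every vertex u with λ(u) = j has a neighbor w with λ(w) = j − 1 and w smaller than u; consequently, the induced ordered subgraph G[λ⁻¹(j)] is a chordal ordered graph with all left-degrees at most d − 1, i.e., G[λ⁻¹(j)] ∈ T_{d−1}. -/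
/-- The induced ordered subgraph on a set of vertices, with the inherited order. -/
noncomputable def OrderedGraph.induce (O : OrderedGraph) (S : Set O.V) : OrderedGraph where
  V := ↥S
  fin := S.toFinite.fintype
  graph := O.graph.induce S

/-- `C` is the vertex set of a connected component of `G − B`. -/
def IsComponentOf {V : Type*} (G : SimpleGraph V) (B C : Set V) : Prop :=
  ∃ x, x ∉ B ∧ C = {y | (restrictSet G Bᶜ).Reachable x y}

/-- The clique-sum class `C₁ ⊕ C₂`: ordered graphs `G` with a base `B ⊆ V(G)` such that
`G[B] ∈ C₁` and for every connected component `C` of `G − B`: `G[C] ∈ C₂`, the set of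
vertices of `B` with a neighbor in `C` induces a clique, and all its vertices are smaller
than all vertices of `C`. -/
def CliqueSum (C₁ C₂ : Set OrderedGraph) : Set OrderedGraph :=
  {O | ∃ B : Set O.V, O.induce B ∈ C₁ ∧
    ∀ C : Set O.V, IsComponentOf O.graph B C →
      O.induce C ∈ C₂ ∧
      (∀ x ∈ B, (∃ c ∈ C, O.graph.Adj x c) →
        ∀ y ∈ B, (∃ c ∈ C, O.graph.Adj y c) → x ≠ y → O.graph.Adj x y) ∧
      (∀ x ∈ B, (∃ c ∈ C, O.graph.Adj x c) → ∀ c ∈ C, x < c)}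

/-!
Along a shortest path from the minimum `v`, the last step into a vertex `u` of layer `j + 1`
comes from some `w` in layer `j`. If `w > u`, then by induction `w` has a smaller neighbor `x` in
layer `j - 1`, and chordality at `w` makes `u` adjacent to `x`, putting `u` in layer at most `j`;
so `w < u`. This smaller neighbor of `u` lies outside the layer of `u`, so the left-degree of `u`
drops by one when passing to the layer, while chordality is inherited by induced subgraphs.
-/

namespace SimpleGraph

variable {V : Type*} {G : SimpleGraph V}

lemma exists_adj_dist_eq_of_dist_eq_succ {v u : V} {n : ℕ} (hu : G.dist v u = n + 1) :
    ∃ w, G.Adj u w ∧ G.dist v w = n := by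
  obtain ⟨p, hp⟩ := exists_walk_of_dist_ne_zero (G := G) (u := u) (v := v) (by grind [dist_comm])
  cases p with
  | nil => simp at hu
  | @cons _ w _ huw q =>
    have hq : q.length = n := by grind [Walk.length_cons, dist_comm]
    refine ⟨w, huw, le_antisymm (hq ▸ dist_comm (G := G) ▸ dist_le q) ?_⟩
    rcases huw.symm.diff_dist_adj (u := v) with h | h | h <;> omega

end SimpleGraph

open SimpleGraph

section Chordal

variable {V : Type*} [LinearOrder V] {G : SimpleGraph V}

lemma ChordalOrdered.induce (hG : ChordalOrdered G) (S : Set V) : ChordalOrdered (G.induce S) :=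
  fun _ _ _ hvu hvw hu hw hne => hG hvu hvw hu hw (Subtype.coe_injective.ne hne)

lemma ChordalOrdered.exists_adj_lt_of_dist_eq_succ (hG : ChordalOrdered G) {v : V}
    (hv : ∀ u, v ≤ u) (n : ℕ) {u : V} (hu : G.dist v u = n + 1) :
    ∃ w, G.Adj u w ∧ G.dist v w = n ∧ w < u := by
  induction n generalizing u with
  | zero =>
    have hvu : G.Adj v u := dist_eq_one_iff_adj.mp hu
    exact ⟨v, hvu.symm, dist_self, (hv u).lt_of_ne hvu.ne⟩
  | succ n ih =>
    obtain ⟨w, huw, hw⟩ := exists_adj_dist_eq_of_dist_eq_succ hu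
    refine ⟨w, huw, hw, not_le.mp fun hwu => ?_⟩
    obtain ⟨x, hwx, hx, hxw⟩ := ih hw
    have hux : G.Adj u x := hG huw.symm hwx (hwu.lt_of_ne huw.ne) hxw (by rintro rfl; omega)
    rcases hux.symm.diff_dist_adj (u := v) with h | h | h <;> omega

end Chordal

lemma ncard_induce_adj_lt_le_sub_one {V : Type*} [LinearOrder V] [Finite V] {G : SimpleGraph V}
    {S : Set V} (u : S) {w : V} (huw : G.Adj u w) (hwu : w < u) (hwS : w ∉ S) :
    {x : S | (G.induce S).Adj u x ∧ x < u}.ncard ≤ {x | G.Adj u x ∧ x < u}.ncard - 1 := by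
  have hsub : Subtype.val '' {x : S | (G.induce S).Adj u x ∧ x < u} ⊆
      {x | G.Adj u x ∧ x < u} \ {w} := by
    rintro _ ⟨x, ⟨hux, hxu⟩, rfl⟩
    exact ⟨⟨hux, hxu⟩, fun hxw => hwS (hxw ▸ x.2)⟩
  calc {x : S | (G.induce S).Adj u x ∧ x < u}.ncard
      = (Subtype.val '' {x : S | (G.induce S).Adj u x ∧ x < u}).ncard :=
        (Set.ncard_image_of_injective _ Subtype.val_injective).symm
    _ ≤ ({x | G.Adj u x ∧ x < u} \ {w}).ncard := Set.ncard_le_ncard hsub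
    _ = {x | G.Adj u x ∧ x < u}.ncard - 1 := Set.ncard_sdiff_singleton_of_mem ⟨huw, hwu⟩

theorem stmt_16_general {V : Type} [Fintype V] [LinearOrder V] (G : SimpleGraph V)
    (d : ℕ) (hchord : ChordalOrdered G)
    (hdeg : ∀ u : V, ({w | G.Adj u w ∧ w < u}).ncard ≤ d)
    (v : V) (hv : ∀ u, v ≤ u) (j : ℕ) (hj : 1 ≤ j) :
    (∀ u : V, G.dist v u = j → ∃ w : V, G.Adj u w ∧ G.dist v w = j - 1 ∧ w < u) ∧
      OrderedGraph.induce { V := V, graph := G } {u | G.dist v u = j} ∈ Tclass (d - 1) := by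
  obtain ⟨n, rfl⟩ : ∃ n, j = n + 1 := ⟨j - 1, by omega⟩
  have hback (u : V) (hu : G.dist v u = n + 1) : ∃ w, G.Adj u w ∧ G.dist v w = n ∧ w < u :=
    hchord.exists_adj_lt_of_dist_eq_succ hv n hu
  refine ⟨hback, hchord.induce _, fun (u : {x | G.dist v x = n + 1}) => ?_⟩
  obtain ⟨w, huw, hw, hwu⟩ := hback u u.2
  calc _ ≤ {x | G.Adj u x ∧ x < u}.ncard - 1 :=
        ncard_induce_adj_lt_le_sub_one u huw hwu (by simp [hw])
    _ ≤ d - 1 := Nat.sub_le_sub_right (hdeg u) 1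

/-- Let `G` be a connected chordal ordered graph with all left-degrees at most `d` (`d ≥ 1`),
`v` its smallest vertex and `λ(u) = d_G(v, u)` the BFS layering from `v`. Then for `j ≥ 1`,
every vertex `u` of the `j`-th layer has a neighbor `w` in layer `j − 1` with `w < u`, and
the induced ordered subgraph on the `j`-th layer belongs to `T_{d−1}`. -/
theorem stmt_16 {V : Type} [Fintype V] [LinearOrder V] (G : SimpleGraph V)
    (d : ℕ) (hd : 1 ≤ d) (hconn : G.Connected) (hchord : ChordalOrdered G)
    (hdeg : ∀ u : V, ({w | G.Adj u w ∧ w < u}).ncard ≤ d)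
    (v : V) (hv : ∀ u, v ≤ u) (j : ℕ) (hj : 1 ≤ j) :
    (∀ u : V, G.dist v u = j → ∃ w : V, G.Adj u w ∧ G.dist v w = j - 1 ∧ w < u) ∧
      OrderedGraph.induce { V := V, graph := G } {u | G.dist v u = j} ∈ Tclass (d - 1) :=
  stmt_16_general G d hchord hdeg v hv j hj
end
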